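/- For a group monomorphism i: H → Γ, the extension-by-zero map sᵢ : D(H) → D(Γ), defined by sᵢ(f)(g) = f(h) if g = i(h) and sᵢ(f)(g) = 0 if g ∉ i(H), is a well-defined linear isometric embedding with respect to the defect norms. -/

import Mathlib

/-- The defect norm of a real-valued function on a group. -/
noncomputable def defectNorm {G : Type*} [Group G] (f : G → ℝ) : ℝ :=
  ⨆ p : G × G, |f (p.1 * p.2) - f p.1 - f p.2|

/-- The defect space `D(Γ)`: bounded alternating real-valued functions on `Γ`. -/
def defectSpace (Γ : Type*) [Group Γ] : Set (Γ → ℝ) :=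
  {f | (∃ C : ℝ, ∀ g : Γ, |f g| ≤ C) ∧ ∀ g : Γ, f g⁻¹ = -f g}

/-- The extension-by-zero of `f : H → ℝ` along a monomorphism `i : H → Γ`:
`sᵢ(f)(g) = f(h)` if `g = i(h)` and `0` if `g` is not in the image of `i`. -/
noncomputable def extendByZero {H Γ : Type*} [Group H] [Group Γ]
    (i : H →* Γ) (f : H → ℝ) : Γ → ℝ :=
  Function.extend i f 0

section DefectNorm

variable {G : Type*} [Group G] {f : G → ℝ} {C : ℝ}

lemma bddAbove_range_abs_defect (hC : ∀ g, |f g| ≤ C) :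
    BddAbove (Set.range fun p : G × G => |f (p.1 * p.2) - f p.1 - f p.2|) := by
  refine ⟨3 * C, ?_⟩
  rintro _ ⟨p, rfl⟩
  have h₁ := abs_le.mp (hC (p.1 * p.2))
  have h₂ := abs_le.mp (hC p.1)
  have h₃ := abs_le.mp (hC p.2)
  rw [abs_le]
  constructor <;> linarith

lemma abs_defect_le_defectNorm (hC : ∀ g, |f g| ≤ C) (g h : G) :
    |f (g * h) - f g - f h| ≤ defectNorm f :=
  le_ciSup (bddAbove_range_abs_defect hC) (g, h)

lemma defectNorm_nonneg (hC : ∀ g, |f g| ≤ C) : 0 ≤ defectNorm f :=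
  (abs_nonneg _).trans (abs_defect_le_defectNorm hC 1 1)

lemma defectNorm_le (hC : 0 ≤ C) (hf : ∀ g h, |f (g * h) - f g - f h| ≤ C) :
    defectNorm f ≤ C :=
  Real.iSup_le (fun p => hf p.1 p.2) hC

/-- With `S = sup |f|`, the defect at `(g, g)` gives `2 |f g| ≤ |f (g * g)| + ‖f‖ ≤ S + ‖f‖`;
hence `S ≤ (S + ‖f‖) / 2`, i.e. `S ≤ ‖f‖`. -/
lemma abs_le_defectNorm (hC : ∀ g, |f g| ≤ C) (g : G) : |f g| ≤ defectNorm f := by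
  set S := ⨆ g : G, |f g|
  have hS : BddAbove (Set.range fun g : G => |f g|) := ⟨C, by rintro _ ⟨g, rfl⟩; exact hC g⟩
  have hhalf : ∀ g : G, |f g| ≤ (S + defectNorm f) / 2 := by
    intro g
    have hsq := abs_le.mp (le_ciSup hS (g * g))
    have hdef := abs_le.mp (abs_defect_le_defectNorm hC g g)
    rw [abs_le]
    constructor <;> linarith
  have : S ≤ (S + defectNorm f) / 2 := ciSup_le hhalf
  linarith [le_ciSup hS g]

end DefectNorm

section ExtendByZero

variable {H Γ : Type*} [Group H] [Group Γ] {i : H →* Γ} {f : H → ℝ} {C : ℝ}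

lemma extendByZero_apply (hi : Function.Injective i) (h : H) :
    extendByZero i f (i h) = f h :=
  hi.extend_apply f (0 : Γ → ℝ) h

lemma extendByZero_apply_of_notMem_range {g : Γ} (hg : g ∉ i.range) :
    extendByZero i f g = 0 :=
  Function.extend_apply' f (0 : Γ → ℝ) g hg

variable (i) in
lemma abs_extendByZero_le (hC : ∀ h, |f h| ≤ C) (g : Γ) : |extendByZero i f g| ≤ C := by
  classical
  rw [extendByZero, Function.extend_def]
  split_ifs
  · exact hC _
  · simpa using (abs_nonneg _).trans (hC 1)

lemma extendByZero_inv (hi : Function.Injective i) (hf : ∀ h, f h⁻¹ = -f h) (g : Γ) :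
    extendByZero i f g⁻¹ = -extendByZero i f g := by
  by_cases hg : g ∈ i.range
  · obtain ⟨h, rfl⟩ := hg
    rw [← map_inv, extendByZero_apply hi, extendByZero_apply hi, hf]
  · rw [extendByZero_apply_of_notMem_range hg,
      extendByZero_apply_of_notMem_range (inv_mem_iff.not.mpr hg), neg_zero]

lemma extendByZero_mem_defectSpace (hi : Function.Injective i) (hf : f ∈ defectSpace H) :
    extendByZero i f ∈ defectSpace Γ :=
  let ⟨⟨C, hC⟩, hinv⟩ := hf
  ⟨⟨C, abs_extendByZero_le i hC⟩, extendByZero_inv hi hinv⟩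

/-- If two of `x`, `y`, `x * y` lie in the subgroup `i.range` then so does the third, so either
the defect at `(x, y)` is a defect of `f`, or at most one of its three terms is nonzero and that
term is bounded by `sup |f| ≤ ‖f‖`. -/
lemma abs_defect_extendByZero_le (hi : Function.Injective i) (hC : ∀ h, |f h| ≤ C) (x y : Γ) :
    |extendByZero i f (x * y) - extendByZero i f x - extendByZero i f y| ≤ defectNorm f := by
  have hF := abs_extendByZero_le i (abs_le_defectNorm hC)
  have hzero : ∀ {g}, g ∉ i.range → extendByZero i f g = 0 :=
    extendByZero_apply_of_notMem_range
  by_cases hx : x ∈ i.range <;> by_cases hy : y ∈ i.range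
  · obtain ⟨a, rfl⟩ := hx
    obtain ⟨b, rfl⟩ := hy
    rw [← map_mul, extendByZero_apply hi, extendByZero_apply hi, extendByZero_apply hi]
    exact abs_defect_le_defectNorm hC a b
  · have hxy : x * y ∉ i.range := (Subgroup.mul_mem_cancel_left _ hx).not.mpr hy
    simpa [hzero hxy, hzero hy] using hF x
  · have hxy : x * y ∉ i.range := (Subgroup.mul_mem_cancel_right _ hy).not.mpr hx
    simpa [hzero hxy, hzero hx] using hF y
  · simpa [hzero hx, hzero hy] using hF (x * y)

lemma defectNorm_extendByZero (hi : Function.Injective i) (hC : ∀ h, |f h| ≤ C) :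
    defectNorm (extendByZero i f) = defectNorm f := by
  refine le_antisymm
    (defectNorm_le (defectNorm_nonneg hC) (abs_defect_extendByZero_le hi hC))
    (defectNorm_le (defectNorm_nonneg (abs_extendByZero_le i hC)) fun a b => ?_)
  have := abs_defect_le_defectNorm (abs_extendByZero_le i hC) (i a) (i b)
  rwa [← map_mul, extendByZero_apply hi, extendByZero_apply hi,
    extendByZero_apply hi] at this

end ExtendByZero

/-- **Extension by zero is a linear isometric embedding `D(H) ↪ D(Γ)`** for a
monomorphism `i : H → Γ`, with respect to the defect norms. -/
theorem extendByZero_isometric_embedding {H Γ : Type*} [Group H] [Group Γ]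
    (i : H →* Γ) (hi : Function.Injective i) :
    -- well-defined: maps `D(H)` into `D(Γ)`
    (∀ f ∈ defectSpace H, extendByZero i f ∈ defectSpace Γ) ∧
    -- linear
    (∀ f g : H → ℝ, extendByZero i (f + g) = extendByZero i f + extendByZero i g) ∧
    (∀ (a : ℝ) (f : H → ℝ), extendByZero i (a • f) = a • extendByZero i f) ∧
    -- isometric w.r.t. the defect norms
    (∀ f ∈ defectSpace H, defectNorm (extendByZero i f) = defectNorm f) ∧
    -- embedding
    (∀ f ∈ defectSpace H, ∀ g ∈ defectSpace H,
      extendByZero i f = extendByZero i g → f = g) := by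
  refine ⟨fun f hf => extendByZero_mem_defectSpace hi hf,
    map_add (Function.ExtendByZero.linearMap ℝ i),
    map_smul (Function.ExtendByZero.linearMap ℝ i),
    fun f ⟨⟨C, hC⟩, _⟩ => defectNorm_extendByZero hi hC,
    fun f _ g _ hfg => Function.extend_injective hi (0 : Γ → ℝ) hfg⟩
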